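/- Let f : ℝ^M → ℝ be continuously differentiable. For any test point x^t and baseline point x⁰ in ℝ^M, the integrated gradients satisfy the completeness (sum) rule: Σ_{i=1}^M IG_i(x^t | x⁰) = f(x^t) − f(x⁰). -/

import Mathlib

/-! Summing the partial derivatives weighted by the displacement `x^t − x⁰` gives the directional
derivative of `f` along the segment from `x⁰` to `x^t`, i.e. the derivative of
`α ↦ f (x⁰ + α • (x^t − x⁰))`; the fundamental theorem of calculus on `[0, 1]` then yields
`f x^t − f x⁰`. -/

open MeasureTheory Finset

/-- Partial derivative of `f : ℝ^M → ℝ` with respect to the `i`-th coordinate. -/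
noncomputable def partialDeriv' {M : ℕ} (f : (Fin M → ℝ) → ℝ) (i : Fin M) (x : Fin M → ℝ) : ℝ :=
  fderiv ℝ f x (Pi.single i 1)

/-- Integrated gradient of `f` at test point `xt` with baseline `x0`, coordinate `i`. -/
noncomputable def IG {M : ℕ} (f : (Fin M → ℝ) → ℝ) (xt x0 : Fin M → ℝ) (i : Fin M) : ℝ :=
  (xt i - x0 i) * ∫ α in (0:ℝ)..1, partialDeriv' f i (x0 + α • (xt - x0))

theorem LinearMap.apply_eq_sum_smul_apply_single {ι R M : Type*} [Fintype ι] [DecidableEq ι]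
    [CommSemiring R] [AddCommMonoid M] [Module R M] (L : (ι → R) →ₗ[R] M) (v : ι → R) :
    L v = ∑ i, v i • L (Pi.single i 1) := by
  conv_lhs => rw [pi_eq_sum_univ' v]
  simp only [map_sum, map_smul]

theorem sum_mul_partialDeriv'_eq_fderiv {M : ℕ} (f : (Fin M → ℝ) → ℝ) (x v : Fin M → ℝ) :
    ∑ i, v i * partialDeriv' f i x = fderiv ℝ f x v :=
  ((fderiv ℝ f x : (Fin M → ℝ) →ₗ[ℝ] ℝ).apply_eq_sum_smul_apply_single v).symm

theorem ContDiff.continuous_partialDeriv' {M : ℕ} {f : (Fin M → ℝ) → ℝ} (hf : ContDiff ℝ 1 f)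
    (i : Fin M) : Continuous (partialDeriv' f i) :=
  (hf.continuous_fderiv one_ne_zero).clm_apply continuous_const

theorem ContDiff.integral_fderiv_segment_eq_sub {E F : Type*} [NormedAddCommGroup E]
    [NormedSpace ℝ E] [NormedAddCommGroup F] [NormedSpace ℝ F] [CompleteSpace F] {f : E → F}
    (hf : ContDiff ℝ 1 f) (x y : E) :
    ∫ t in (0 : ℝ)..1, fderiv ℝ f (x + t • (y - x)) (y - x) = f y - f x := by
  have hγ (t : ℝ) : HasDerivAt (fun t : ℝ => x + t • (y - x)) (y - x) t := by
    simpa using ((hasDerivAt_id t).smul_const (y - x)).const_add x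
  have hderiv (t : ℝ) :
      HasDerivAt (fun t => f (x + t • (y - x))) (fderiv ℝ f (x + t • (y - x)) (y - x)) t :=
    (hf.differentiable one_ne_zero _).hasFDerivAt.comp_hasDerivAt t (hγ t)
  have hcont : Continuous fun t : ℝ => fderiv ℝ f (x + t • (y - x)) (y - x) := by fun_prop
  rw [intervalIntegral.integral_eq_sub_of_hasDerivAt (fun t _ => hderiv t)
    (hcont.intervalIntegrable 0 1)]
  simp

/-- completeness (sum) rule for integrated gradients:
`Σ_i IG_i(x^t | x⁰) = f(x^t) − f(x⁰)`. -/
theorem ig_completeness {M : ℕ} (f : (Fin M → ℝ) → ℝ) (hf : ContDiff ℝ 1 f)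
    (xt x0 : Fin M → ℝ) :
    ∑ i : Fin M, IG f xt x0 i = f xt - f x0 := by
  have hint (i : Fin M) : IntervalIntegrable
      (fun α : ℝ => (xt - x0) i * partialDeriv' f i (x0 + α • (xt - x0))) volume 0 1 :=
    (continuous_const.mul ((hf.continuous_partialDeriv' i).comp (by fun_prop))).intervalIntegrable
      0 1
  calc ∑ i, IG f xt x0 i
      = ∫ α in (0 : ℝ)..1, ∑ i, (xt - x0) i * partialDeriv' f i (x0 + α • (xt - x0)) := by
        rw [intervalIntegral.integral_finsetSum fun i _ => hint i]
        simp only [IG, ← intervalIntegral.integral_const_mul, Pi.sub_apply]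
    _ = ∫ α in (0 : ℝ)..1, fderiv ℝ f (x0 + α • (xt - x0)) (xt - x0) := by
        simp only [sum_mul_partialDeriv'_eq_fderiv]
    _ = f xt - f x0 := hf.integral_fderiv_segment_eq_sub x0 xt
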